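/- Assume c ≤ -c_m. Then for every x₀ ∈ ℝ, sup over x ≤ -(c_m + c)·t + x₀ of u(t,x) tends to 0 as t → ∞; in particular, for every x₀ ∈ ℝ, sup over x ≤ x₀ of u(t,x) tends to 0 as t → ∞. -/

import Mathlib

open Real Filter Set

noncomputable section

/-- Hypotheses on a KPP nonlinearity `f_m`. -/
structure KPPHyp (fm : ℝ → ℝ) : Prop where
  smooth : ContDiff ℝ 1 fm
  zero : fm 0 = 0
  one : fm 1 = 0
  pos : ∀ s ∈ Set.Ioo (0:ℝ) 1, 0 < fm s
  le_lin : ∀ s ∈ Set.Ioo (0:ℝ) 1, fm s ≤ deriv fm 0 * s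
  deriv_one_neg : deriv fm 1 < 0
  neg : ∀ s : ℝ, 1 < s → fm s < 0

/-- The minimal KPP wave speed `c_m = 2√(f_m'(0))`. -/
def cm (fm : ℝ → ℝ) : ℝ := 2 * Real.sqrt (deriv fm 0)

/-- Hypotheses on a bistable nonlinearity `f_b` with interior zero `θ`. -/
structure BistableHyp (fb : ℝ → ℝ) (θ : ℝ) : Prop where
  smooth : ContDiff ℝ 1 fb
  theta_mem : θ ∈ Set.Ioo (0:ℝ) 1
  zero : fb 0 = 0
  at_theta : fb θ = 0
  one : fb 1 = 0
  d0 : deriv fb 0 < 0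
  dtheta : 0 < deriv fb θ
  d1 : deriv fb 1 < 0
  pos : ∀ s ∈ Set.Ioo θ 1, 0 < fb s
  neg_low : ∀ s ∈ Set.Ioo (0:ℝ) θ, fb s < 0
  neg_high : ∀ s : ℝ, 1 < s → fb s < 0

/-- The bistable traveling front `φ` with speed `c_b`, normalized by `φ(0) = θ`. -/
structure FrontHyp (fb : ℝ → ℝ) (θ cb : ℝ) (φ : ℝ → ℝ) : Prop where
  smooth : ContDiff ℝ 2 φ
  mem_Ioo : ∀ x, φ x ∈ Set.Ioo (0:ℝ) 1
  decreasing : ∀ x, deriv φ x < 0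
  ode : ∀ x, deriv (deriv φ) x + cb * deriv φ x + fb (φ x) = 0
  limBot : Filter.Tendsto φ Filter.atBot (nhds 1)
  limTop : Filter.Tendsto φ Filter.atTop (nhds 0)
  normalized : φ 0 = θ

/-- The heterogeneous KPP-transition-bistable reaction term `f(x,s)`. -/
structure HeterogHyp (fm fb : ℝ → ℝ) (L : ℝ) (f : ℝ → ℝ → ℝ) : Prop where
  Lpos : 0 < L
  smooth : ContDiff ℝ 2 (fun p : ℝ × ℝ => f p.1 p.2)
  lip : ∀ R : ℝ, 0 < R → ∃ K : ℝ, ∀ x : ℝ, ∀ s ∈ Set.Icc (-R) R, ∀ s' ∈ Set.Icc (-R) R,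
      |f x s - f x s'| ≤ K * |s - s'|
  zero : ∀ x, f x 0 = 0
  one : ∀ x, f x 1 = 0
  ds_one_neg : ∀ x, deriv (fun s => f x s) 1 < 0
  nonpos : ∀ x : ℝ, ∀ s : ℝ, 1 ≤ s → f x s ≤ 0
  eq_left : ∀ x : ℝ, x ≤ -L → ∀ s : ℝ, 0 ≤ s → f x s = fm s
  eq_right : ∀ x : ℝ, L ≤ x → ∀ s : ℝ, 0 ≤ s → f x s = fb s
  mono : ∀ s : ℝ, 0 ≤ s → AntitoneOn (fun x => f x s) (Set.Icc (-L) L)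

/-- A (bounded, nonnegative) solution of the Cauchy problem
`u_t = u_xx + c u_x + f(x,u)`, `u(0,·) = u₀`, with `u₀` continuous, nonnegative,
compactly supported and not identically zero. -/
structure CauchyHyp (f : ℝ → ℝ → ℝ) (c : ℝ) (u0 : ℝ → ℝ) (u : ℝ → ℝ → ℝ) : Prop where
  u0_cont : Continuous u0
  u0_nonneg : ∀ x, 0 ≤ u0 x
  u0_cpt : HasCompactSupport u0
  u0_ne : u0 ≠ 0
  nonneg : ∀ t : ℝ, 0 ≤ t → ∀ x, 0 ≤ u t x
  bdd : ∃ M : ℝ, ∀ t : ℝ, 0 ≤ t → ∀ x, u t x ≤ M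
  cont : ContinuousOn (fun p : ℝ × ℝ => u p.1 p.2) (Set.Ici 0 ×ˢ Set.univ)
  t_diff : ∀ t : ℝ, 0 < t → ∀ x : ℝ, DifferentiableAt ℝ (fun τ => u τ x) t
  x_smooth : ∀ t : ℝ, 0 < t → ContDiff ℝ 2 (fun y => u t y)
  pde : ∀ t : ℝ, 0 < t → ∀ x : ℝ,
      deriv (fun τ => u τ x) t =
        deriv (deriv (fun y => u t y)) x + c * deriv (fun y => u t y) x + f x (u t x)
  init : ∀ x, u 0 x = u0 x

/-- A positive bounded stationary solution connecting `1` at `-∞` to `0` at `+∞`. -/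
def IsFrontStat (f : ℝ → ℝ → ℝ) (c : ℝ) (U : ℝ → ℝ) : Prop :=
  ContDiff ℝ 2 U ∧ (∀ x, 0 < U x) ∧ (∃ M : ℝ, ∀ x, U x ≤ M) ∧
  (∀ x, deriv (deriv U) x + c * deriv U x + f x (U x) = 0) ∧
  Filter.Tendsto U Filter.atBot (nhds 1) ∧ Filter.Tendsto U Filter.atTop (nhds 0)


open Topology

/-! Since `f(x, s) ≤ f_m'(0) s =: a s` for `s ≥ 0`, the solution is a subsolution of the linear
equation `w_t = w_xx + c w_x + a w`, which has the explicit solutions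
`A e^{a t} (t + 1)^{-1/2} exp (-(x + c t)² / (4 (t + 1)))`. A Gaussian initial bound on the
compactly supported datum and the comparison principle keep `u` below such a barrier. On the
half-line `x ≤ -(c_m + c) t + x₀` we have `(x + c t)² ≥ (2 √a t - x₀)²`, and because `c_m = 2 √a`
the Gaussian factor cancels the growth `e^{a t}` up to a constant, leaving the decay
`(t + 1)^{-1/2}`. When `c ≤ -c_m` every half-line `x ≤ x₀` lies in that region. -/

theorem IsLocalMax.deriv_deriv_nonpos {f : ℝ → ℝ} {x₀ : ℝ} (h : IsLocalMax f x₀)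
    (hc : ContinuousAt f x₀) : deriv (deriv f) x₀ ≤ 0 := by
  by_contra! hpos
  have hconst : f =ᶠ[𝓝 x₀] fun _ => f x₀ :=
    ((isLocalMin_of_deriv_deriv_pos hpos h.deriv_eq_zero hc).and h).mono
      fun _ hy => le_antisymm hy.2 hy.1
  simp [hconst.deriv.deriv_eq] at hpos

theorem deriv_eq_of_eventually_le_of_eq {p q : ℝ → ℝ} {x₀ : ℝ} (hp : DifferentiableAt ℝ p x₀)
    (hq : DifferentiableAt ℝ q x₀) (hle : ∀ᶠ y in 𝓝 x₀, p y ≤ q y) (heq : p x₀ = q x₀) :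
    deriv p x₀ = deriv q x₀ := by
  have hmax : IsLocalMax (fun y => p y - q y) x₀ :=
    hle.mono fun y hy => by simp only [heq, sub_self]; linarith
  have := hmax.deriv_eq_zero
  rw [deriv_fun_sub hp hq] at this
  linarith

theorem deriv_deriv_le_of_le_of_eq {p q : ℝ → ℝ} {x₀ : ℝ} (hp : ContDiff ℝ 2 p)
    (hq : ContDiff ℝ 2 q) (hle : ∀ y, p y ≤ q y) (heq : p x₀ = q x₀) :
    deriv (deriv p) x₀ ≤ deriv (deriv q) x₀ := by
  have hmax : IsLocalMax (fun y => p y - q y) x₀ :=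
    Eventually.of_forall fun y => by simp only [heq, sub_self]; linarith [hle y]
  have hd : deriv (fun y => p y - q y) = fun y => deriv p y - deriv q y := funext fun y =>
    deriv_fun_sub (hp.differentiable two_ne_zero y) (hq.differentiable two_ne_zero y)
  have := hmax.deriv_deriv_nonpos (hp.continuous.sub hq.continuous).continuousAt
  rw [hd, deriv_fun_sub (hp.differentiable_deriv_two x₀) (hq.differentiable_deriv_two x₀)] at this
  linarith

theorem le_of_hasDerivAt_of_eventually_le_nhdsLT {p q : ℝ → ℝ} {p' q' t₀ : ℝ}
    (hp : HasDerivAt p p' t₀) (hq : HasDerivAt q q' t₀) (hle : ∀ᶠ t in 𝓝[<] t₀, p t ≤ q t)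
    (heq : p t₀ = q t₀) : q' ≤ p' := by
  have hslope := (hasDerivAt_iff_tendsto_slope_left_right.mp (hp.sub hq)).1
  have hnonneg : ∀ᶠ t in 𝓝[<] t₀, 0 ≤ slope (fun t => p t - q t) t₀ t := by
    filter_upwards [hle, self_mem_nhdsWithin] with t ht ht'
    rw [slope_def_field, heq, sub_self, sub_zero]
    exact div_nonneg_of_nonpos (by linarith) (by linarith [mem_Iio.mp ht'])
  linarith [ge_of_tendsto hslope hnonneg]

theorem abs_le_cosh (x : ℝ) : |x| ≤ cosh x := by
  rw [← cosh_abs]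
  exact (self_le_sinh_iff.2 (abs_nonneg x)).trans (sinh_lt_cosh _).le

theorem mul_sinh_le_abs_mul_cosh (c x : ℝ) : c * sinh x ≤ |c| * cosh x := by
  have : |sinh x| ≤ cosh x := by
    rw [abs_sinh, ← cosh_abs x]
    exact (sinh_lt_cosh _).le
  calc c * sinh x ≤ |c * sinh x| := le_abs_self _
    _ = |c| * |sinh x| := abs_mul c _
    _ ≤ |c| * cosh x := by gcongr

theorem exists_first_nonneg {g : ℝ → ℝ → ℝ} {T R t₁ x₁ : ℝ}
    (hg : ContinuousOn (fun p : ℝ × ℝ => g p.1 p.2) (Icc 0 T ×ˢ univ))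
    (h0 : ∀ x, g 0 x < 0) (hR : ∀ t ∈ Icc 0 T, ∀ x, 0 ≤ g t x → |x| ≤ R)
    (ht₁ : t₁ ∈ Icc 0 T) (hx₁ : 0 ≤ g t₁ x₁) :
    ∃ t₀ ∈ Ioc 0 T, ∃ x₀, g t₀ x₀ = 0 ∧ (∀ y, g t₀ y ≤ 0) ∧ ∀ t ∈ Ico 0 t₀, g t x₀ < 0 := by
  set S := (Icc 0 T ×ˢ univ) ∩ (fun p : ℝ × ℝ => g p.1 p.2) ⁻¹' Ici 0
  have hS : IsCompact S :=
    (isCompact_Icc.prod (isCompact_Icc (a := -R) (b := R))).of_isClosed_subset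
      (hg.preimage_isClosed_of_isClosed (isClosed_Icc.prod isClosed_univ) isClosed_Ici)
      fun p hp => ⟨hp.1.1, abs_le.mp (hR _ hp.1.1 _ hp.2)⟩
  obtain ⟨⟨t₀, x₀⟩, ⟨⟨ht₀, -⟩, hx₀ : 0 ≤ g t₀ x₀⟩, hmin⟩ :=
    hS.exists_isMinOn ⟨(t₁, x₁), ⟨ht₁, trivial⟩, hx₁⟩ continuous_fst.continuousOn
  replace ht₀ : t₀ ∈ Icc 0 T := ht₀
  have hbefore : ∀ t ∈ Ico 0 t₀, ∀ y, g t y < 0 := fun t ht y => by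
    by_contra! hy
    exact (hmin (a := (t, y)) ⟨⟨⟨ht.1, ht.2.le.trans ht₀.2⟩, trivial⟩, hy⟩).not_gt ht.2
  have ht₀pos : 0 < t₀ := ht₀.1.lt_of_ne fun h => (h0 x₀).not_ge (h ▸ hx₀)
  have hslice : ∀ y, g t₀ y ≤ 0 := fun y =>
    ContinuousWithinAt.closure_le (f := fun t => g t y) (s := Ico 0 t₀)
      (by simp [closure_Ico ht₀pos.ne, ht₀.1])
      ((hg (t₀, y) ⟨ht₀, trivial⟩).comp (f := fun t : ℝ => (t, y))
        (Continuous.prodMk_left y).continuousWithinAt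
        fun t ht => ⟨⟨ht.1, ht.2.le.trans ht₀.2⟩, trivial⟩)
      continuousWithinAt_const fun t ht => (hbefore t ht y).le
  exact ⟨t₀, ⟨ht₀pos, ht₀.2⟩, x₀, (hslice x₀).antisymm hx₀, hslice, fun t ht => hbefore t ht x₀⟩

structure IsLinearSupersolution (c a T : ℝ) (W : ℝ → ℝ → ℝ) : Prop where
  cont : ContinuousOn (fun p : ℝ × ℝ => W p.1 p.2) (Icc 0 T ×ˢ univ)
  t_diff : ∀ t ∈ Ioc 0 T, ∀ x, DifferentiableAt ℝ (fun τ => W τ x) t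
  x_smooth : ∀ t ∈ Ioc 0 T, ContDiff ℝ 2 (fun y => W t y)
  super : ∀ t ∈ Ioc 0 T, ∀ x,
    deriv (deriv (fun y => W t y)) x + c * deriv (fun y => W t y) x + a * W t x ≤
      deriv (fun τ => W τ x) t
  nonneg : ∀ t ∈ Icc 0 T, ∀ x, 0 ≤ W t x
  bdd : ∃ B, ∀ t ∈ Icc 0 T, ∀ x, W t x ≤ B

section Comparison

variable {f : ℝ → ℝ → ℝ} {c a T : ℝ} {u0 : ℝ → ℝ} {u W : ℝ → ℝ → ℝ}

theorem CauchyHyp.false_of_touch (hu : CauchyHyp f c u0 u) (hW : IsLinearSupersolution c a T W)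
    (hlin : ∀ x s, 0 ≤ s → f x s ≤ a * s) {R K β δ t₀ x₀ : ℝ}
    (hK : ∀ x, ∀ s ∈ Icc 0 R, ∀ s' ∈ Icc 0 R, |f x s - f x s'| ≤ K * |s - s'|)
    (huR : u t₀ x₀ ≤ R) (hWR : W t₀ x₀ ≤ R) (hβ : |K| + |c| + 1 < β) (hδ : 0 < δ)
    (ht₀ : t₀ ∈ Ioc 0 T) (hle : ∀ y, u t₀ y ≤ W t₀ y + δ * exp (β * t₀) * cosh y)
    (heq : u t₀ x₀ = W t₀ x₀ + δ * exp (β * t₀) * cosh x₀)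
    (hbefore : ∀ t ∈ Ico 0 t₀, u t x₀ ≤ W t x₀ + δ * exp (β * t) * cosh x₀) : False := by
  set k := δ * exp (β * t₀)
  have hE : 0 < k * cosh x₀ := mul_pos (by positivity) (cosh_pos x₀)
  have hWx := hW.x_smooth t₀ ht₀
  have hux := hu.x_smooth t₀ ht₀.1
  have hq : ContDiff ℝ 2 fun y => W t₀ y + k * cosh y := hWx.add (contDiff_const.mul contDiff_cosh)
  have hdq : deriv (fun y => W t₀ y + k * cosh y) =
      fun y => deriv (fun y => W t₀ y) y + k * sinh y :=
    funext fun y =>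
      ((hWx.differentiable two_ne_zero y).hasDerivAt.add ((hasDerivAt_cosh y).const_mul k)).deriv
  have hx : deriv (fun y => u t₀ y) x₀ = deriv (fun y => W t₀ y) x₀ + k * sinh x₀ := by
    rw [deriv_eq_of_eventually_le_of_eq (hux.differentiable two_ne_zero x₀)
      (hq.differentiable two_ne_zero x₀) (Eventually.of_forall hle) heq, hdq]
  have hxx :
      deriv (deriv fun y => u t₀ y) x₀ ≤ deriv (deriv fun y => W t₀ y) x₀ + k * cosh x₀ := by
    have h := deriv_deriv_le_of_le_of_eq hux hq hle heq
    rwa [hdq, ((hWx.differentiable_deriv_two x₀).hasDerivAt.fun_add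
      ((hasDerivAt_sinh x₀).const_mul k)).deriv] at h
  have ht : deriv (fun τ => W τ x₀) t₀ + β * (k * cosh x₀) ≤ deriv (fun τ => u τ x₀) t₀ := by
    have he : HasDerivAt (fun τ => δ * exp (β * τ) * cosh x₀) (β * (k * cosh x₀)) t₀ :=
      ((((hasDerivAt_id' t₀).const_mul β).exp.const_mul δ).mul_const (cosh x₀)).congr_deriv
        (by simp only [k]; ring)
    exact le_of_hasDerivAt_of_eventually_le_nhdsLT (hu.t_diff t₀ ht₀.1 x₀).hasDerivAt
      ((hW.t_diff t₀ ht₀ x₀).hasDerivAt.add he) (mem_of_superset (Ico_mem_nhdsLT ht₀.1) hbefore) heq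
  have hreact : f x₀ (u t₀ x₀) ≤ a * W t₀ x₀ + |K| * (k * cosh x₀) := by
    have hW0 := hW.nonneg t₀ (Ioc_subset_Icc_self ht₀) x₀
    have hLip := hK x₀ _ ⟨hu.nonneg t₀ ht₀.1.le x₀, huR⟩ _ ⟨hW0, hWR⟩
    rw [show u t₀ x₀ - W t₀ x₀ = k * cosh x₀ by linarith, abs_of_pos hE] at hLip
    nlinarith [le_abs_self (f x₀ (u t₀ x₀) - f x₀ (W t₀ x₀)), hlin x₀ _ hW0, le_abs_self K]
  have hdrift : c * (k * sinh x₀) ≤ |c| * (k * cosh x₀) := by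
    have := mul_le_mul_of_nonneg_left (mul_sinh_le_abs_mul_cosh c x₀) (by positivity : 0 ≤ k)
    linarith
  -- the equations bound `u_t - W_t` by `(1 + |c| + |K|) k cosh x₀`, below the `β k cosh x₀` of `ht`
  have hpde := hu.pde t₀ ht₀.1 x₀
  rw [hx] at hpde
  nlinarith [hW.super t₀ ht₀ x₀]

/-- The perturbation `δ e^{β t} cosh x` makes a first contact with `u` strict, and its growth in
`|x|` confines the contact set to a compact rectangle. -/
theorem CauchyHyp.lt_add_mul_exp_mul_cosh (hu : CauchyHyp f c u0 u)
    (hW : IsLinearSupersolution c a T W) (hlin : ∀ x s, 0 ≤ s → f x s ≤ a * s) {R K β δ : ℝ}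
    (hK : ∀ x, ∀ s ∈ Icc 0 R, ∀ s' ∈ Icc 0 R, |f x s - f x s'| ≤ K * |s - s'|)
    (huR : ∀ t ∈ Icc 0 T, ∀ x, u t x ≤ R) (hWR : ∀ t ∈ Icc 0 T, ∀ x, W t x ≤ R)
    (hβ : |K| + |c| + 1 < β) (hδ : 0 < δ) (hinit : ∀ x, u0 x ≤ W 0 x) :
    ∀ t ∈ Icc 0 T, ∀ x, u t x < W t x + δ * exp (β * t) * cosh x := by
  intro t ht x
  by_contra! hge
  have hcont : ContinuousOn (fun p : ℝ × ℝ =>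
      u p.1 p.2 - (W p.1 p.2 + δ * exp (β * p.1) * cosh p.2)) (Icc 0 T ×ˢ univ) :=
    (hu.cont.mono (prod_mono Icc_subset_Ici_self subset_rfl)).sub (hW.cont.add (by fun_prop))
  have h0 : ∀ x, u 0 x - (W 0 x + δ * exp (β * 0) * cosh x) < 0 := fun x => by
    rw [hu.init, mul_zero, exp_zero, mul_one]
    nlinarith [hinit x, cosh_pos x]
  have hR : ∀ t ∈ Icc 0 T, ∀ x,
      0 ≤ u t x - (W t x + δ * exp (β * t) * cosh x) → |x| ≤ R / δ := by
    intro t ht x hx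
    have hexp : 1 ≤ exp (β * t) :=
      one_le_exp (mul_nonneg (by linarith [abs_nonneg K, abs_nonneg c]) ht.1)
    have h1 := mul_le_mul_of_nonneg_left hexp (mul_nonneg hδ.le (cosh_pos x).le)
    have h2 := mul_le_mul_of_nonneg_right (abs_le_cosh x) hδ.le
    rw [le_div_iff₀ hδ]
    nlinarith [huR t ht x, hW.nonneg t ht x]
  obtain ⟨t₀, ht₀, x₀, hzero, hslice, hbefore⟩ :=
    exists_first_nonneg (g := fun t x => u t x - (W t x + δ * exp (β * t) * cosh x))
      hcont h0 hR ht (by linarith)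
  exact hu.false_of_touch hW hlin hK (huR t₀ (Ioc_subset_Icc_self ht₀) x₀)
    (hWR t₀ (Ioc_subset_Icc_self ht₀) x₀) hβ hδ ht₀ (fun y => by linarith [hslice y])
    (by linarith) (fun t ht => by linarith [hbefore t ht])

theorem CauchyHyp.le_of_isLinearSupersolution (hu : CauchyHyp f c u0 u)
    (hW : IsLinearSupersolution c a T W)
    (hlip : ∀ R : ℝ, 0 < R → ∃ K : ℝ, ∀ x : ℝ, ∀ s ∈ Icc (-R) R, ∀ s' ∈ Icc (-R) R,
      |f x s - f x s'| ≤ K * |s - s'|)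
    (hlin : ∀ x s, 0 ≤ s → f x s ≤ a * s) (hinit : ∀ x, u0 x ≤ W 0 x) :
    ∀ t ∈ Icc 0 T, ∀ x, u t x ≤ W t x := by
  obtain ⟨M, hM⟩ := hu.bdd
  obtain ⟨B, hB⟩ := hW.bdd
  obtain ⟨K, hK⟩ := hlip (|M| + |B| + 1) (by positivity)
  have hRpos : 0 ≤ |M| + |B| + 1 := by positivity
  have hK' : ∀ x, ∀ s ∈ Icc 0 (|M| + |B| + 1), ∀ s' ∈ Icc 0 (|M| + |B| + 1),
      |f x s - f x s'| ≤ K * |s - s'| := fun x s hs s' hs' =>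
    hK x s ⟨by linarith [hs.1], hs.2⟩ s' ⟨by linarith [hs'.1], hs'.2⟩
  intro t ht x
  refine le_of_forall_pos_lt_add fun ε hε => ?_
  have hE : 0 < exp ((|K| + |c| + 2) * t) * cosh x := mul_pos (exp_pos _) (cosh_pos x)
  have := hu.lt_add_mul_exp_mul_cosh hW hlin hK' (β := |K| + |c| + 2)
    (fun t ht x => (hM t ht.1 x).trans (by linarith [le_abs_self M, abs_nonneg B]))
    (fun t ht x => (hB t ht x).trans (by linarith [le_abs_self B, abs_nonneg M]))
    (by linarith) (div_pos hε hE) hinit t ht x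
  rwa [mul_assoc, div_mul_cancel₀ _ hE.ne'] at this

end Comparison

/-- `A e^{a t}` times the heat kernel of `w_t = w_xx + c w_x` issued from time `-1`. -/
def gaussianBarrier (A a c t x : ℝ) : ℝ :=
  A * exp (a * t - (x + c * t) ^ 2 / (4 * (t + 1)) - log (t + 1) / 2)

section gaussianBarrier

variable (A a c : ℝ) {t : ℝ}

theorem hasDerivAt_gaussianBarrier_x (ht : 0 < t + 1) (x : ℝ) :
    HasDerivAt (fun y => gaussianBarrier A a c t y)
      (-(x + c * t) / (2 * (t + 1)) * gaussianBarrier A a c t x) x := by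
  have h := ((((hasDerivAt_id' x).add_const (c * t)).fun_pow 2).div_const (4 * (t + 1))
    |>.const_sub (a * t) |>.sub_const (log (t + 1) / 2)).exp.const_mul A
  refine h.congr_deriv ?_
  simp only [gaussianBarrier]
  field_simp
  ring

theorem deriv_deriv_gaussianBarrier_x (ht : 0 < t + 1) (x : ℝ) :
    deriv (deriv fun y => gaussianBarrier A a c t y) x =
      ((x + c * t) ^ 2 / (4 * (t + 1) ^ 2) - 1 / (2 * (t + 1))) * gaussianBarrier A a c t x := by
  have hd : deriv (fun y => gaussianBarrier A a c t y) =
      fun y => -(y + c * t) / (2 * (t + 1)) * gaussianBarrier A a c t y :=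
    funext fun y => (hasDerivAt_gaussianBarrier_x A a c ht y).deriv
  rw [hd]
  refine ((((hasDerivAt_id' x).add_const (c * t)).fun_neg.div_const (2 * (t + 1))).mul
    (hasDerivAt_gaussianBarrier_x A a c ht x)).deriv.trans ?_
  field_simp
  ring

theorem hasDerivAt_gaussianBarrier_t (ht : 0 < t + 1) (x : ℝ) :
    HasDerivAt (fun τ => gaussianBarrier A a c τ x)
      ((a - c * (x + c * t) / (2 * (t + 1)) + (x + c * t) ^ 2 / (4 * (t + 1) ^ 2)
        - 1 / (2 * (t + 1))) * gaussianBarrier A a c t x) t := by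
  have hsq := (((hasDerivAt_id' t).const_mul c).const_add x).fun_pow 2
  have hden := ((hasDerivAt_id' t).add_const (1 : ℝ)).const_mul 4
  have hlog := ((hasDerivAt_id' t).add_const (1 : ℝ)).log ht.ne'
  have h := ((((hasDerivAt_id' t).const_mul a).fun_sub (hsq.fun_div hden (by positivity))).fun_sub
    (hlog.div_const 2)).exp.const_mul A
  refine h.congr_deriv ?_
  simp only [gaussianBarrier]
  field_simp
  ring

variable {A} in
theorem isLinearSupersolution_gaussianBarrier (hA : 0 ≤ A) (T : ℝ) :
    IsLinearSupersolution c a T (gaussianBarrier A a c) where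
  cont := by
    unfold gaussianBarrier
    fun_prop (disch := rintro ⟨t, x⟩ ⟨⟨ht, -⟩, -⟩; dsimp only; positivity)
  t_diff t ht x := (hasDerivAt_gaussianBarrier_t A a c (by linarith [ht.1]) x).differentiableAt
  x_smooth t ht := by
    unfold gaussianBarrier
    fun_prop
  super t ht x := by
    have ht' : 0 < t + 1 := by linarith [ht.1]
    rw [deriv_deriv_gaussianBarrier_x A a c ht', (hasDerivAt_gaussianBarrier_x A a c ht' x).deriv,
      (hasDerivAt_gaussianBarrier_t A a c ht' x).deriv]
    exact le_of_eq (by ring)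
  nonneg t _ x := mul_nonneg hA (exp_pos _).le
  bdd := by
    refine ⟨A * exp (|a| * T), fun t ht x => mul_le_mul_of_nonneg_left (exp_le_exp.2 ?_) hA⟩
    have : 0 ≤ (x + c * t) ^ 2 / (4 * (t + 1)) := by have := ht.1; positivity
    have : 0 ≤ log (t + 1) := log_nonneg (by linarith [ht.1])
    nlinarith [le_abs_self a, abs_nonneg a, ht.1, ht.2]

theorem gaussianBarrier_zero (x : ℝ) : gaussianBarrier A a c 0 x = A * exp (-(x ^ 2 / 4)) := by
  simp [gaussianBarrier]

end gaussianBarrier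

theorem gaussianBarrier_le_of_add_le {A a c x₀ t x : ℝ} (hA : 0 ≤ A) (ha : 0 ≤ a) (ht : 0 ≤ t)
    (hx₀ : x₀ ≤ 2 * √a * t) (hx : x + c * t ≤ x₀ - 2 * √a * t) :
    gaussianBarrier A a c t x ≤ A * exp (a + √a * |x₀| - log (t + 1) / 2) := by
  refine mul_le_mul_of_nonneg_left (exp_le_exp.2 (sub_le_sub_right ?_ _)) hA
  have hsq : (2 * √a * t - x₀) ^ 2 ≤ (x + c * t) ^ 2 := by nlinarith
  have hkey : (a * t - (a + √a * |x₀|)) * (4 * (t + 1)) ≤ (x + c * t) ^ 2 := by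
    have hl : (√a * t) ^ 2 = a * t ^ 2 := by rw [mul_pow, sq_sqrt ha]
    nlinarith [sq_nonneg x₀, mul_nonneg (sqrt_nonneg a) (abs_nonneg x₀),
      mul_nonneg (mul_nonneg (sqrt_nonneg a) ht) (sub_nonneg.2 (le_abs_self x₀))]
  have := (le_div_iff₀ (by positivity : (0 : ℝ) < 4 * (t + 1))).2 hkey
  linarith

theorem tendsto_mul_exp_sub_log_div_two (A C : ℝ) :
    Tendsto (fun t => A * exp (C - log (t + 1) / 2)) atTop (𝓝 0) := by
  have hlog : Tendsto (fun t : ℝ => log (t + 1) / 2) atTop atTop :=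
    (tendsto_log_atTop.comp (tendsto_atTop_add_const_right _ 1 tendsto_id)).atTop_div_const two_pos
  simpa [sub_eq_add_neg] using (tendsto_exp_atBot.comp (tendsto_atBot_add_const_left _ C
    (tendsto_neg_atTop_atBot.comp hlog))).const_mul A

theorem exists_gaussianBarrier_le {A a : ℝ} (c x₀ : ℝ) (hA : 0 ≤ A) (ha : 0 < a) {ε : ℝ}
    (hε : 0 < ε) : ∃ T ≥ 0, ∀ t ≥ T, ∀ x, x ≤ -(2 * √a + c) * t + x₀ →
      gaussianBarrier A a c t x ≤ ε := by
  obtain ⟨T, hT⟩ := eventually_atTop.1 ((tendsto_mul_exp_sub_log_div_two A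
    (a + √a * |x₀|)).eventually (eventually_le_nhds hε))
  refine ⟨max T (max 0 (x₀ / (2 * √a))), by positivity, fun t ht x hx => ?_⟩
  obtain ⟨hTt, ht0, hx₀t⟩ : T ≤ t ∧ 0 ≤ t ∧ x₀ / (2 * √a) ≤ t := by
    simpa only [max_le_iff] using ht
  have hx₀ : x₀ ≤ 2 * √a * t := by
    rwa [div_le_iff₀' (by positivity)] at hx₀t
  exact (gaussianBarrier_le_of_add_le hA ha.le ht0 hx₀ (by linarith)).trans (hT t hTt)

theorem HasCompactSupport.exists_le_mul_exp_neg_sq_div {g : ℝ → ℝ} (hg : Continuous g)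
    (hcs : HasCompactSupport g) (b : ℝ) : ∃ A, 0 ≤ A ∧ ∀ x, g x ≤ A * exp (-(x ^ 2 / b)) := by
  obtain ⟨C, hC⟩ := (hg.mul (by fun_prop : Continuous fun x : ℝ => exp (x ^ 2 / b))
    ).bounded_above_of_compact_support (hcs.mul_right (f' := fun x => exp (x ^ 2 / b)))
  refine ⟨max C 0, le_max_right _ _, fun x => ?_⟩
  calc g x = g x * exp (x ^ 2 / b) * exp (-(x ^ 2 / b)) := by rw [mul_assoc, ← exp_add]; simp
    _ ≤ max C 0 * exp (-(x ^ 2 / b)) := by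
      gcongr
      exact (le_abs_self _).trans ((hC x).trans (le_max_left _ _))

theorem KPPHyp.deriv_zero_pos {fm : ℝ → ℝ} (hfm : KPPHyp fm) : 0 < deriv fm 0 := by
  have h1 := hfm.pos (1 / 2) ⟨by norm_num, by norm_num⟩
  have h2 := hfm.le_lin (1 / 2) ⟨by norm_num, by norm_num⟩
  linarith

theorem KPPHyp.le_deriv_zero_mul {fm : ℝ → ℝ} (hfm : KPPHyp fm) {s : ℝ} (hs : 0 ≤ s) :
    fm s ≤ deriv fm 0 * s := by
  have ha := hfm.deriv_zero_pos
  rcases hs.eq_or_lt with rfl | hs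
  · simp [hfm.zero]
  rcases lt_trichotomy s 1 with h | rfl | h
  · exact hfm.le_lin s ⟨hs, h⟩
  · rw [hfm.one]
    linarith
  · nlinarith [hfm.neg s h]

theorem HeterogHyp.le_fm {fm fb : ℝ → ℝ} {L : ℝ} {f : ℝ → ℝ → ℝ} (hf : HeterogHyp fm fb L f)
    (x : ℝ) {s : ℝ} (hs : 0 ≤ s) : f x s ≤ fm s := by
  have hL := hf.Lpos
  rw [← hf.eq_left (-L) le_rfl s hs]
  rcases le_or_gt x (-L) with hx | hx
  · rw [hf.eq_left x hx s hs, hf.eq_left (-L) le_rfl s hs]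
  rcases le_or_gt x L with hx' | hx'
  · exact hf.mono s hs ⟨le_rfl, by linarith⟩ ⟨hx.le, hx'⟩ hx.le
  · rw [hf.eq_right x hx'.le s hs, ← hf.eq_right L le_rfl s hs]
    exact hf.mono s hs ⟨le_rfl, by linarith⟩ ⟨by linarith, le_rfl⟩ (by linarith)

theorem leftward_decay_general (fm fb : ℝ → ℝ) (L : ℝ) (f : ℝ → ℝ → ℝ) (c : ℝ)
    (u0 : ℝ → ℝ) (u : ℝ → ℝ → ℝ)
    (hfm : KPPHyp fm) (hf : HeterogHyp fm fb L f)
    (hu : CauchyHyp f c u0 u)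
    (hc : c ≤ -cm fm) :
    ∀ x₀ : ℝ,
      (∀ ε : ℝ, 0 < ε → ∃ T : ℝ, ∀ t : ℝ, T ≤ t → ∀ x : ℝ,
          x ≤ -(cm fm + c) * t + x₀ → u t x ≤ ε) ∧
      (∀ ε : ℝ, 0 < ε → ∃ T : ℝ, ∀ t : ℝ, T ≤ t → ∀ x : ℝ, x ≤ x₀ → u t x ≤ ε) := by
  set a := deriv fm 0
  have ha : 0 < a := hfm.deriv_zero_pos
  obtain ⟨A, hA, hu0⟩ := hu.u0_cpt.exists_le_mul_exp_neg_sq_div hu.u0_cont 4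
  have hbelow : ∀ t, 0 ≤ t → ∀ x, u t x ≤ gaussianBarrier A a c t x := fun t ht =>
    hu.le_of_isLinearSupersolution (isLinearSupersolution_gaussianBarrier a c hA t) hf.lip
      (fun x s hs => (hf.le_fm x hs).trans (hfm.le_deriv_zero_mul hs))
      (fun x => (hu0 x).trans_eq (gaussianBarrier_zero A a c x).symm) t ⟨ht, le_rfl⟩
  intro x₀
  have hray : ∀ ε : ℝ, 0 < ε → ∃ T : ℝ, ∀ t : ℝ, T ≤ t → ∀ x : ℝ,
      x ≤ -(cm fm + c) * t + x₀ → u t x ≤ ε := fun ε hε => by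
    obtain ⟨T, hT0, hT⟩ := exists_gaussianBarrier_le c x₀ hA ha hε
    exact ⟨T, fun t ht x hx => (hbelow t (hT0.trans ht) x).trans (hT t ht x hx)⟩
  refine ⟨hray, fun ε hε => ?_⟩
  obtain ⟨T, hT⟩ := hray ε hε
  refine ⟨max T 0, fun t ht x hx => hT t (le_of_max_le_left ht) x ?_⟩
  nlinarith [le_of_max_le_right ht]

/-- for `c ≤ -c_m`, the solution tends to `0` uniformly on
`{x ≤ -(c_m+c)t + x₀}`, and in particular uniformly on `{x ≤ x₀}`. -/
theorem leftward_decay (fm fb : ℝ → ℝ) (θ : ℝ) (L : ℝ) (f : ℝ → ℝ → ℝ) (c : ℝ)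
    (u0 : ℝ → ℝ) (u : ℝ → ℝ → ℝ)
    (hfm : KPPHyp fm) (hfb : BistableHyp fb θ) (hf : HeterogHyp fm fb L f)
    (hu : CauchyHyp f c u0 u)
    (hc : c ≤ -cm fm) :
    ∀ x₀ : ℝ,
      (∀ ε : ℝ, 0 < ε → ∃ T : ℝ, ∀ t : ℝ, T ≤ t → ∀ x : ℝ,
          x ≤ -(cm fm + c) * t + x₀ → u t x ≤ ε) ∧
      (∀ ε : ℝ, 0 < ε → ∃ T : ℝ, ∀ t : ℝ, T ≤ t → ∀ x : ℝ, x ≤ x₀ → u t x ≤ ε) :=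
  leftward_decay_general fm fb L f c u0 u hfm hf hu hc
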